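/- (Sufficiency in the Multi-Robot Stability Condition Lemma.) Fix N ≥ 1 robots as in the context, with common period T > 0 such that T/T_r ∈ ℕ for every r. If Σ_{r=1}^N c_r·τ_r/T_r > p, then for every accumulation function Z there exists a finite time t̄ such that Z(t) ≤ T·Σ_{r=1}^N c_r for all t ≥ t̄; in particular limsup_{t→∞} Z(t) ≤ T·Σ_{r=1}^N c_r. -/

import Mathlib

/-!
While `Z` stays positive on a window of one common period `T`, `Z' = p - C` a.e., and robot `r`
consumes `c_r τ_r T / T_r` over the window because `T` is a whole number of its periods; so `Z`
drops by at least `δ T`, where `δ = Σ_r c_r τ_r / T_r - p > 0`. Hence `Z` has a zero. After the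
last zero `a` before `t`, `Z` rises at rate at most `p` over the incomplete period and does not
increase over the full periods, so `Z t ≤ p T ≤ T Σ_r c_r`.
-/

open MeasureTheory Filter Set

/-- Total consumption rate at time `t`: the sum of `c_r` over the robots whose footprint
currently covers the point of interest, i.e. those with `θ_r(t) ∈ F_r`. -/
noncomputable def totalConsumption (N : ℕ) (F : Fin N → Set ℝ) (c : Fin N → ℝ)
    (θ : Fin N → ℝ → ℝ) (t : ℝ) : ℝ :=
  ∑ r : Fin N, (F r).indicator (fun _ => c r) (θ r t)

/-- A multi-robot accumulation function: a locally absolutely continuous nonnegative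
function `Z` (written as the integral of a locally integrable derivative `g`) such that
a.e. `Z' = p − C(t)` when `Z > 0` and `Z' = max (p − C(t)) 0` when `Z = 0`, where `C` is
the total consumption rate. -/
def IsMultiAccumulation (N : ℕ) (F : Fin N → Set ℝ) (c : Fin N → ℝ)
    (θ : Fin N → ℝ → ℝ) (p : ℝ) (Z : ℝ → ℝ) : Prop :=
  (∀ t : ℝ, 0 ≤ Z t) ∧
  ∃ g : ℝ → ℝ, MeasureTheory.LocallyIntegrable g MeasureTheory.volume ∧
    (∀ a b : ℝ, Z b - Z a = ∫ s in a..b, g s) ∧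
    (∀ᵐ t : ℝ, (0 < Z t → g t = p - totalConsumption N F c θ t) ∧
      (Z t = 0 → g t = max (p - totalConsumption N F c θ t) 0))

theorem Function.Periodic.intervalIntegral_add_nat_mul_eq {E : Type*} [NormedAddCommGroup E]
    [NormedSpace ℝ E] {f : ℝ → E} {T : ℝ} (hf : Function.Periodic f T) (hT : 0 < T) (n : ℕ)
    (t : ℝ) : ∫ x in t..t + n * T, f x = n • ∫ x in t..t + T, f x := by
  by_cases hi : IntervalIntegrable f volume t (t + T)
  · simpa using hf.intervalIntegral_add_zsmul_eq n t (hf.intervalIntegrable hT.ne' hi)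
  -- otherwise both sides are the junk value `0`
  rcases n.eq_zero_or_pos with rfl | hn
  · simp
  have hsub : uIcc t (t + T) ⊆ uIcc t (t + n * T) := by
    rw [uIcc_of_le (by linarith), uIcc_of_le (le_add_of_nonneg_right (by positivity))]
    exact Icc_subset_Icc_right (by nlinarith [show (1 : ℝ) ≤ n by exact_mod_cast hn])
  rw [intervalIntegral.integral_undef hi,
    intervalIntegral.integral_undef fun h => hi (h.mono_set hsub), smul_zero]

theorem MeasureTheory.LocallyIntegrable.intervalIntegrable {E : Type*} [NormedAddCommGroup E]
    {f : ℝ → E} {μ : Measure ℝ} [IsLocallyFiniteMeasure μ] (hf : LocallyIntegrable f μ)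
    (a b : ℝ) : IntervalIntegrable f μ a b :=
  (hf.integrableOn_isCompact isCompact_uIcc).intervalIntegrable

/-- A summand that is not interval integrable contributes the junk value `0` on the left, so no
integrability of the `f i` is needed. -/
theorem sum_intervalIntegral_le_of_ae_sum_le {ι : Type*} (s : Finset ι) {f : ι → ℝ → ℝ}
    {h : ℝ → ℝ} {a b : ℝ} (hab : a ≤ b) (hf : ∀ i ∈ s, ∀ x, 0 ≤ f i x)
    (hh : IntervalIntegrable h volume a b) (hle : ∀ᵐ x, x ∈ Ioo a b → ∑ i ∈ s, f i x ≤ h x) :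
    ∑ i ∈ s, ∫ x in a..b, f i x ≤ ∫ x in a..b, h x := by
  classical
  set S := {i ∈ s | IntervalIntegrable (f i) volume a b}
  have hS : ∀ i ∈ S, IntervalIntegrable (f i) volume a b := fun i hi => (Finset.mem_filter.1 hi).2
  have hle' : (fun x => ∑ i ∈ S, f i x) ≤ᵐ[volume.restrict (Icc a b)] h := by
    rw [← Measure.restrict_congr_set Ioo_ae_eq_Icc, EventuallyLE, ae_restrict_iff' measurableSet_Ioo]
    filter_upwards [hle] with x hx hxab
    exact (Finset.sum_le_sum_of_subset_of_nonneg (Finset.filter_subset _ s)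
      fun i hi _ => hf i hi x).trans (hx hxab)
  calc ∑ i ∈ s, ∫ x in a..b, f i x = ∑ i ∈ S, ∫ x in a..b, f i x :=
        (Finset.sum_filter_of_ne fun i _ hi =>
          not_not.1 fun hni => hi (intervalIntegral.integral_undef hni)).symm
    _ = ∫ x in a..b, ∑ i ∈ S, f i x := (intervalIntegral.integral_finsetSum hS).symm
    _ ≤ ∫ x in a..b, h x := by
      refine intervalIntegral.integral_mono_ae_restrict hab ?_ hh hle'
      simpa only [Finset.sum_fn] using IntervalIntegrable.sum S hS

section Drift

variable {Z : ℝ → ℝ} {p T δ : ℝ}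

theorem exists_eq_zero_of_drift (hT : 0 < T) (hδ : 0 < δ) (hZ : ∀ t, 0 ≤ Z t)
    (hdrift : ∀ a, (∀ u ∈ Ioo a (a + T), 0 < Z u) → Z (a + T) + δ * T ≤ Z a) :
    ∃ s, Z s = 0 := by
  by_contra! hne
  have hpos : ∀ u, 0 < Z u := fun u => (hZ u).lt_of_ne (hne u).symm
  have hiter : ∀ n : ℕ, Z (n * T) + n * (δ * T) ≤ Z 0 := by
    intro n
    induction n with
    | zero => simp
    | succ n ih =>
      have := hdrift (n * T) fun u _ => hpos u
      rw [Nat.cast_succ, add_one_mul]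
      linarith
  obtain ⟨n, hn⟩ := exists_nat_gt (Z 0 / (δ * T))
  rw [div_lt_iff₀ (mul_pos hδ hT)] at hn
  linarith [hiter n, hZ (n * T)]

theorem le_mul_of_eq_zero_of_forall_mem_Ioo_pos (hT : 0 < T) (hp : 0 ≤ p)
    (hgrowth : ∀ a b, a ≤ b → Z b - Z a ≤ p * (b - a))
    (hdrift : ∀ a, (∀ u ∈ Ioo a (a + T), 0 < Z u) → Z (a + T) ≤ Z a)
    {a t : ℝ} (hza : Z a = 0) (hat : a ≤ t) (hpos : ∀ u ∈ Ioo a t, 0 < Z u) :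
    Z t ≤ p * T := by
  obtain ⟨n, hn⟩ := exists_nat_gt ((t - a) / T)
  rw [div_lt_iff₀ hT] at hn
  induction n generalizing t with
  | zero => simp at hn; linarith
  | succ n ih =>
    by_cases hlt : t < a + T
    · nlinarith [hgrowth a t hat]
    rw [not_lt] at hlt
    have hprev := ih (t := t - T) (by linarith) (fun u hu => hpos u ⟨hu.1, by linarith [hu.2]⟩)
      (by push_cast at hn; linarith)
    have hstep := hdrift (t - T) fun u hu => hpos u ⟨by linarith [hu.1], by linarith [hu.2]⟩
    rw [sub_add_cancel] at hstep
    linarith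

theorem exists_forall_ge_le_of_drift (hT : 0 < T) (hδ : 0 < δ) (hp : 0 ≤ p)
    (hZ : ∀ t, 0 ≤ Z t) (hcont : Continuous Z)
    (hgrowth : ∀ a b, a ≤ b → Z b - Z a ≤ p * (b - a))
    (hdrift : ∀ a, (∀ u ∈ Ioo a (a + T), 0 < Z u) → Z (a + T) + δ * T ≤ Z a) :
    ∃ tbar, ∀ t, tbar ≤ t → Z t ≤ p * T := by
  obtain ⟨s, hs⟩ := exists_eq_zero_of_drift hT hδ hZ hdrift
  refine ⟨s, fun t hst => ?_⟩
  obtain ⟨a, ⟨⟨hsa, hat⟩, hza⟩, hlast⟩ :=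
    (isCompact_Icc.inter_right (isClosed_singleton.preimage hcont)).exists_isGreatest
      ⟨s, ⟨le_rfl, hst⟩, hs⟩
  refine le_mul_of_eq_zero_of_forall_mem_Ioo_pos hT hp hgrowth
    (fun b hb => by nlinarith [hdrift b hb]) hza hat fun u hu => (hZ u).lt_of_ne fun hzu => ?_
  exact hu.1.not_ge (hlast ⟨⟨hsa.trans hu.1.le, hu.2.le⟩, hzu.symm⟩)

end Drift

section Coverage

variable {θ : ℝ → ℝ} {F : Set ℝ} {P τ : ℝ}

theorem le_of_forall_intervalIntegral_indicator_comp_eq (hP : 0 < P)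
    (hcov : ∀ t, ∫ s in t..t + P, F.indicator (fun _ => (1 : ℝ)) (θ s) = τ) : τ ≤ P := by
  have hnorm := intervalIntegral.norm_integral_le_of_norm_le_const (a := 0) (b := 0 + P) (C := 1)
    (f := fun s => F.indicator (fun _ => (1 : ℝ)) (θ s))
    fun x _ => (norm_indicator_le_norm_self _ _).trans_eq norm_one
  rw [hcov, Real.norm_eq_abs, zero_add, sub_zero, abs_of_pos hP, one_mul] at hnorm
  exact (le_abs_self τ).trans hnorm

theorem intervalIntegral_indicator_comp_of_periodic (hθ : Function.Periodic θ P) (hP : 0 < P)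
    (hcov : ∀ t, ∫ s in t..t + P, F.indicator (fun _ => (1 : ℝ)) (θ s) = τ) (c : ℝ) {T : ℝ}
    {k : ℕ} (hk : T = k * P) (a : ℝ) :
    ∫ s in a..a + T, F.indicator (fun _ => c) (θ s) = c * (τ / P) * T := by
  have hind : ∀ s, F.indicator (fun _ => c) (θ s) = c * F.indicator (fun _ => (1 : ℝ)) (θ s) :=
    fun s => by by_cases hs : θ s ∈ F <;> simp [hs]
  have hper : Function.Periodic (fun s => F.indicator (fun _ => (1 : ℝ)) (θ s)) P :=
    hθ.comp (F.indicator fun _ => 1)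
  simp_rw [hind, intervalIntegral.integral_const_mul, hk,
    hper.intervalIntegral_add_nat_mul_eq hP, hcov, nsmul_eq_mul]
  field_simp

end Coverage

section Accumulation

variable {N : ℕ} {F : Fin N → Set ℝ} {c : Fin N → ℝ} {θ : Fin N → ℝ → ℝ} {p : ℝ} {Z : ℝ → ℝ}

theorem totalConsumption_nonneg (hc : ∀ r, 0 ≤ c r) (t : ℝ) :
    0 ≤ totalConsumption N F c θ t :=
  Finset.sum_nonneg fun r _ => Set.indicator_nonneg (fun _ _ => hc r) _

namespace IsMultiAccumulation

theorem continuous (hZ : IsMultiAccumulation N F c θ p Z) : Continuous Z := by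
  obtain ⟨-, g, hg, hZg, -⟩ := hZ
  have hprim : Z = fun t => Z 0 + ∫ s in 0..t, g s := funext fun t => by linarith [hZg 0 t]
  rw [hprim]
  exact continuous_const.add (intervalIntegral.continuous_primitive hg.intervalIntegrable 0)

theorem sub_le_mul (hZ : IsMultiAccumulation N F c θ p Z) (hc : ∀ r, 0 ≤ c r) (hp : 0 ≤ p)
    {a b : ℝ} (hab : a ≤ b) : Z b - Z a ≤ p * (b - a) := by
  obtain ⟨hZ0, g, hg, hZg, hgae⟩ := hZ
  have hgp : g ≤ᵐ[volume] fun _ => p := by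
    filter_upwards [hgae] with t ⟨hpos, hzero⟩
    have hC := totalConsumption_nonneg (F := F) (θ := θ) hc t
    rcases (hZ0 t).lt_or_eq with h | h
    · rw [hpos h]
      linarith
    · rw [hzero h.symm]
      exact max_le (by linarith) hp
  calc Z b - Z a = ∫ s in a..b, g s := hZg a b
    _ ≤ ∫ _ in a..b, p :=
      intervalIntegral.integral_mono_ae hab (hg.intervalIntegrable a b) intervalIntegrable_const hgp
    _ = p * (b - a) := by rw [intervalIntegral.integral_const, smul_eq_mul, mul_comm]

theorem sub_add_sum_le (hZ : IsMultiAccumulation N F c θ p Z) (hc : ∀ r, 0 ≤ c r) {a b : ℝ}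
    (hab : a ≤ b) (hpos : ∀ u ∈ Ioo a b, 0 < Z u) :
    Z b - Z a + ∑ r, ∫ s in a..b, (F r).indicator (fun _ => c r) (θ r s) ≤ p * (b - a) := by
  obtain ⟨-, g, hg, hZg, hgae⟩ := hZ
  have hsum := sum_intervalIntegral_le_of_ae_sum_le Finset.univ hab
    (fun r _ s => Set.indicator_nonneg (fun _ _ => hc r) _)
    (intervalIntegrable_const.sub (hg.intervalIntegrable a b)) (h := fun s => p - g s) <| by
      filter_upwards [hgae] with s hs hsab
      rw [hs.1 (hpos s hsab), sub_sub_cancel]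
      rfl
  rw [intervalIntegral.integral_sub intervalIntegrable_const (hg.intervalIntegrable a b),
    intervalIntegral.integral_const, smul_eq_mul, ← hZg] at hsum
  linarith

end IsMultiAccumulation

end Accumulation

theorem multirobot_stability_sufficiency_general (N : ℕ)
    (F : Fin N → Set ℝ)
    (c : Fin N → ℝ) (hc : ∀ r, 0 < c r)
    (θ : Fin N → ℝ → ℝ)
    (Tr : Fin N → ℝ) (hTr : ∀ r, 0 < Tr r)
    (hper : ∀ r t, θ r (t + Tr r) = θ r t)
    (τ : Fin N → ℝ)
    (hcov : ∀ r, ∀ t : ℝ,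
      (∫ s in t..(t + Tr r), (F r).indicator (fun _ => (1 : ℝ)) (θ r s)) = τ r)
    (p : ℝ) (hp : 0 < p)
    (T : ℝ) (hT : 0 < T) (hcommon : ∀ r, ∃ k : ℕ, T = (k : ℝ) * Tr r)
    (hstab : p < ∑ r, c r * (τ r / Tr r))
    (Z : ℝ → ℝ) (hZ : IsMultiAccumulation N F c θ p Z) :
    ∃ tbar : ℝ, (∀ t : ℝ, tbar ≤ t → Z t ≤ T * ∑ r, c r) ∧
      Filter.limsup Z Filter.atTop ≤ T * ∑ r, c r := by
  have hc₀ : ∀ r, 0 ≤ c r := fun r => (hc r).le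
  have hpc : p ≤ ∑ r, c r := hstab.le.trans <| Finset.sum_le_sum fun r _ =>
    mul_le_of_le_one_right (hc₀ r) <| div_le_one_of_le₀
      (le_of_forall_intervalIntegral_indicator_comp_eq (hTr r) (hcov r)) (hTr r).le
  have hrate : ∀ r a, ∫ s in a..a + T, (F r).indicator (fun _ => c r) (θ r s) =
      c r * (τ r / Tr r) * T := fun r a => by
    obtain ⟨k, hk⟩ := hcommon r
    exact intervalIntegral_indicator_comp_of_periodic (hper r) (hTr r) (hcov r) (c r) hk a
  have hdrift : ∀ a, (∀ u ∈ Ioo a (a + T), 0 < Z u) →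
      Z (a + T) + (∑ r, c r * (τ r / Tr r) - p) * T ≤ Z a := fun a hpos => by
    have h := hZ.sub_add_sum_le hc₀ (le_add_of_nonneg_right hT.le) hpos
    simp only [hrate, ← Finset.sum_mul, add_sub_cancel_left] at h
    linarith
  obtain ⟨tbar, hbound⟩ := exists_forall_ge_le_of_drift hT (sub_pos.2 hstab) hp.le hZ.1
    hZ.continuous (fun _ _ => hZ.sub_le_mul hc₀ hp.le) hdrift
  have hle : ∀ t, tbar ≤ t → Z t ≤ T * ∑ r, c r := fun t ht =>
    (hbound t ht).trans (by rw [mul_comm]; exact mul_le_mul_of_nonneg_left hpc hT.le)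
  exact ⟨tbar, hle, limsup_le_of_le (isCoboundedUnder_le_of_le atTop hZ.1)
    (eventually_atTop.2 ⟨tbar, hle⟩)⟩

/-- Sufficiency in the multi-robot stability condition lemma: if
`Σ_r c_r·τ_r/T_r > p` then every multi-robot accumulation function is eventually
bounded by `T·Σ_r c_r`, where `T` is a common period of all the robots. -/
theorem multirobot_stability_sufficiency (N : ℕ) (hN : 1 ≤ N)
    (F : Fin N → Set ℝ) (hF : ∀ r, MeasurableSet (F r))
    (c : Fin N → ℝ) (hc : ∀ r, 0 < c r)
    (θ : Fin N → ℝ → ℝ) (hθ : ∀ r t, θ r t ∈ Set.Icc (0 : ℝ) 1)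
    (Tr : Fin N → ℝ) (hTr : ∀ r, 0 < Tr r)
    (hper : ∀ r t, θ r (t + Tr r) = θ r t)
    (τ : Fin N → ℝ) (hτ : ∀ r, 0 ≤ τ r)
    (hcov : ∀ r, ∀ t : ℝ,
      (∫ s in t..(t + Tr r), (F r).indicator (fun _ => (1 : ℝ)) (θ r s)) = τ r)
    (p : ℝ) (hp : 0 < p)
    (T : ℝ) (hT : 0 < T) (hcommon : ∀ r, ∃ k : ℕ, T = (k : ℝ) * Tr r)
    (hstab : p < ∑ r, c r * (τ r / Tr r))
    (Z : ℝ → ℝ) (hZ : IsMultiAccumulation N F c θ p Z) :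
    ∃ tbar : ℝ, (∀ t : ℝ, tbar ≤ t → Z t ≤ T * ∑ r, c r) ∧
      Filter.limsup Z Filter.atTop ≤ T * ∑ r, c r :=
  multirobot_stability_sufficiency_general N F c hc θ Tr hTr hper τ hcov p hp T hT hcommon hstab Z
    hZ
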